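/- arXiv:1305.6356 — 5 statements merged into one kernel-verified Lean document; each statement's English description precedes it below -/
import Mathlib

section
/- Let χ₁ and χ₂ be quadratic (real-valued) Dirichlet characters modulo N₁ and N₂ respectively, let k ≥ 2 be an integer, and set N = N₁N₂. Then for every positive integer n with gcd(n, N) = 1, the sign of σ_{χ₁,χ₂}^{k-1}(n) equals χ₂(n); that is, σ_{χ₁,χ₂}^{k-1}(n) > 0 if χ₂(n) = 1 and σ_{χ₁,χ₂}^{k-1}(n) < 0 if χ₂(n) = -1 (note χ₂(n) = ±1 since gcd(n, N₂) = 1). -/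
/-- The signed divisor sum `σ_{χ₁,χ₂}^{k-1}(n) = ∑_{d ∣ n} χ₁(n/d) χ₂(d) d^{k-1}`
for real-valued Dirichlet characters. -/
def sigmaR {N₁ N₂ : ℕ} (χ₁ : DirichletCharacter ℝ N₁) (χ₂ : DirichletCharacter ℝ N₂)
    (k : ℕ) (n : ℕ) : ℝ :=
  ∑ d ∈ n.divisors, χ₁ ((n / d : ℕ) : ZMod N₁) * χ₂ ((d : ℕ) : ZMod N₂) * (d : ℝ) ^ (k - 1)

/-- Auxiliary arithmetic function attached to `n ↦ χ(n) * n^(k-1)`. -/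
def auxAF {N : ℕ} (χ : DirichletCharacter ℝ N) (k : ℕ) : ArithmeticFunction ℝ :=
  ⟨fun n => if n = 0 then 0 else χ (n : ZMod N) * (n : ℝ) ^ (k - 1), if_pos rfl⟩

lemma auxAF_apply {N : ℕ} (χ : DirichletCharacter ℝ N) (k : ℕ) {n : ℕ} (hn : n ≠ 0) :
    auxAF χ k n = χ (n : ZMod N) * (n : ℝ) ^ (k - 1) := if_neg hn

lemma auxAF_mult {N : ℕ} (χ : DirichletCharacter ℝ N) (k : ℕ) :
    (auxAF χ k).IsMultiplicative := by
  rw [ArithmeticFunction.IsMultiplicative.iff_ne_zero]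
  constructor
  · simp [auxAF_apply χ k one_ne_zero]
  · intro m n hm hn _
    rw [auxAF_apply χ k hm, auxAF_apply χ k hn, auxAF_apply χ k (Nat.mul_ne_zero hm hn)]
    push_cast
    rw [map_mul]
    ring

lemma geom_bound (q : ℝ) (hq2 : 2 ≤ q) : ∀ e : ℕ, ∑ i ∈ Finset.range e, q ^ i ≤ q ^ e - 1 := by
  have hq0 : (0:ℝ) < q := lt_of_lt_of_le two_pos hq2
  intro e
  induction e with
  | zero => simp
  | succ m ih =>
      rw [Finset.sum_range_succ, pow_succ]
      nlinarith [pow_pos hq0 m]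

lemma key_pos {N₁ N₂ : ℕ} (χ₁ : DirichletCharacter ℝ N₁) (χ₂ : DirichletCharacter ℝ N₂)
    (k : ℕ) (hk : 2 ≤ k) (p e : ℕ) (hp : p.Prime)
    (h1 : Nat.Coprime p N₁) (h2 : Nat.Coprime p N₂)
    (ha : |χ₁ ((p : ℕ) : ZMod N₁)| = 1) (hb : |χ₂ ((p : ℕ) : ZMod N₂)| = 1) :
    0 < χ₂ ((p ^ e : ℕ) : ZMod N₂) * sigmaR χ₁ χ₂ k (p ^ e) := by
  set a : ℝ := χ₁ ((p : ℕ) : ZMod N₁) with ha'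
  set b : ℝ := χ₂ ((p : ℕ) : ZMod N₂) with hb'
  set q : ℝ := (p : ℝ) ^ (k - 1) with hq
  have hq2 : (2 : ℝ) ≤ q := by
    calc (2:ℝ) = 2 ^ 1 := (pow_one 2).symm
    _ ≤ (p:ℝ) ^ 1 := by
        gcongr
        exact_mod_cast hp.two_le
    _ ≤ (p:ℝ) ^ (k-1) := by
        apply pow_le_pow_right₀
        · exact_mod_cast hp.one_lt.le
        · omega
  have hq0 : (0:ℝ) < q := lt_of_lt_of_le two_pos hq2
  have hsig : sigmaR χ₁ χ₂ k (p ^ e) = ∑ i ∈ Finset.range (e+1), a ^ (e - i) * b ^ i * q ^ i := by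
    unfold sigmaR
    rw [Nat.sum_divisors_prime_pow hp]
    apply Finset.sum_congr rfl
    intro i hi
    rw [Finset.mem_range] at hi
    have : p ^ e / p ^ i = p ^ (e - i) := Nat.pow_div (by omega) hp.pos
    rw [this]
    push_cast
    rw [map_pow, map_pow, ← pow_mul, ← pow_mul, Nat.mul_comm]
  have hchie : χ₂ ((p ^ e : ℕ) : ZMod N₂) = b ^ e := by
    push_cast; rw [map_pow]
  rw [hchie, hsig, Finset.mul_sum, Finset.sum_range_succ]
  have hbsq : b ^ e * (a ^ (e - e) * b ^ e * q ^ e) = q ^ e := by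
    have : |b ^ e| = 1 := by rw [abs_pow, hb, one_pow]
    rcases abs_eq (by norm_num : (0:ℝ) ≤ 1) |>.mp this with h | h <;>
      simp [Nat.sub_self, h] <;> ring
  rw [hbsq]
  have hbound : ∀ i ∈ Finset.range e, -(q ^ i) ≤ b ^ e * (a ^ (e - i) * b ^ i * q ^ i) := by
    intro i _
    have habs : |b ^ e * (a ^ (e - i) * b ^ i * q ^ i)| = q ^ i := by
      rw [abs_mul, abs_mul, abs_mul, abs_pow, abs_pow, abs_pow, ha, hb, one_pow, one_pow,
        one_pow, abs_pow, abs_of_pos hq0]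
      ring
    calc -(q ^ i) = -|b ^ e * (a ^ (e - i) * b ^ i * q ^ i)| := by rw [habs]
    _ ≤ _ := neg_abs_le _
  have hgeom : ∑ i ∈ Finset.range e, q ^ i ≤ q ^ e - 1 := geom_bound q hq2 e
  have h1 : -(q ^ e - 1) ≤ ∑ i ∈ Finset.range e, b ^ e * (a ^ (e - i) * b ^ i * q ^ i) := by
    calc -(q ^ e - 1) ≤ -∑ i ∈ Finset.range e, q ^ i := by linarith
    _ = ∑ i ∈ Finset.range e, -(q ^ i) := by rw [Finset.sum_neg_distrib]
    _ ≤ _ := Finset.sum_le_sum hbound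
  linarith

/-- If `χ₁, χ₂` are quadratic (real-valued) Dirichlet characters mod `N₁, N₂`, `k ≥ 2`,
`N = N₁N₂`, and `gcd(n, N) = 1` with `n ≥ 1`, then the sign of `σ_{χ₁,χ₂}^{k-1}(n)`
equals `χ₂(n)`. -/
theorem stmt_0 (N₁ N₂ : ℕ) (χ₁ : DirichletCharacter ℝ N₁) (χ₂ : DirichletCharacter ℝ N₂)
    (hχ₁ : ∀ n : ℕ, χ₁ (n : ZMod N₁) = 0 ∨ χ₁ (n : ZMod N₁) = 1 ∨ χ₁ (n : ZMod N₁) = -1)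
    (hχ₂ : ∀ n : ℕ, χ₂ (n : ZMod N₂) = 0 ∨ χ₂ (n : ZMod N₂) = 1 ∨ χ₂ (n : ZMod N₂) = -1)
    (k : ℕ) (hk : 2 ≤ k) (n : ℕ) (hn : 0 < n) (hcop : Nat.gcd n (N₁ * N₂) = 1) :
    Real.sign (sigmaR χ₁ χ₂ k n) = χ₂ ((n : ℕ) : ZMod N₂) ∧
    (χ₂ ((n : ℕ) : ZMod N₂) = 1 → 0 < sigmaR χ₁ χ₂ k n) ∧
    (χ₂ ((n : ℕ) : ZMod N₂) = -1 → sigmaR χ₁ χ₂ k n < 0) := by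
  -- the arithmetic functions
  set F := auxAF χ₁ 1 with hF
  set G := auxAF χ₂ k with hG
  set H := auxAF χ₂ 1 with hH
  have hF1 : ∀ {m : ℕ}, m ≠ 0 → F m = χ₁ (m : ZMod N₁) := by
    intro m hm; rw [hF, auxAF_apply _ _ hm]; simp
  have hH1 : ∀ {m : ℕ}, m ≠ 0 → H m = χ₂ (m : ZMod N₂) := by
    intro m hm; rw [hH, auxAF_apply _ _ hm]; simp
  have hsigma : ∀ {m : ℕ}, m ≠ 0 → sigmaR χ₁ χ₂ k m = (F * G) m := by
    intro m hm
    rw [ArithmeticFunction.mul_apply, Nat.sum_divisorsAntidiagonal' (f := fun x y => F x * G y)]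
    apply Finset.sum_congr rfl
    intro d hd
    rw [Nat.mem_divisors] at hd
    have hd0 : d ≠ 0 := by rintro rfl; exact hm (Nat.eq_zero_of_zero_dvd hd.1)
    have hnd0 : m / d ≠ 0 := Nat.ne_of_gt (Nat.div_pos (Nat.le_of_dvd (Nat.pos_of_ne_zero hm) hd.1) (Nat.pos_of_ne_zero hd0))
    rw [hF1 hnd0, hG, auxAF_apply _ _ hd0]
    ring
  have hFG : (F * G).IsMultiplicative :=
    ArithmeticFunction.IsMultiplicative.mul (auxAF_mult χ₁ 1) (auxAF_mult χ₂ k)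
  have hHm : H.IsMultiplicative := auxAF_mult χ₂ 1
  -- key positivity
  have hpos : 0 < χ₂ ((n : ℕ) : ZMod N₂) * sigmaR χ₁ χ₂ k n := by
    rw [← hH1 hn.ne', hsigma hn.ne',
      ArithmeticFunction.IsMultiplicative.multiplicative_factorization H hHm hn.ne',
      ArithmeticFunction.IsMultiplicative.multiplicative_factorization (F * G) hFG hn.ne',
      Finsupp.prod, Finsupp.prod, ← Finset.prod_mul_distrib]
    apply Finset.prod_pos
    intro p hp
    rw [Nat.support_factorization] at hp
    have hpp : p.Prime := Nat.prime_of_mem_primeFactors hp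
    have hpdvd : p ∣ n := Nat.dvd_of_mem_primeFactors hp
    have hcp : Nat.Coprime p (N₁ * N₂) := Nat.Coprime.coprime_dvd_left hpdvd hcop
    have hcp1 : Nat.Coprime p N₁ := Nat.Coprime.coprime_dvd_right ⟨N₂, rfl⟩ hcp
    have hcp2 : Nat.Coprime p N₂ := Nat.Coprime.coprime_dvd_right ⟨N₁, Nat.mul_comm _ _⟩ hcp
    have hu1 : IsUnit ((p : ℕ) : ZMod N₁) := (ZMod.isUnit_iff_coprime p N₁).mpr hcp1
    have hu2 : IsUnit ((p : ℕ) : ZMod N₂) := (ZMod.isUnit_iff_coprime p N₂).mpr hcp2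
    have hne1 : χ₁ ((p : ℕ) : ZMod N₁) ≠ 0 := (hu1.map χ₁).ne_zero
    have hne2 : χ₂ ((p : ℕ) : ZMod N₂) ≠ 0 := (hu2.map χ₂).ne_zero
    have ha : |χ₁ ((p : ℕ) : ZMod N₁)| = 1 := by
      rcases hχ₁ p with h | h | h
      · exact absurd h hne1
      · rw [h]; norm_num
      · rw [h]; norm_num
    have hb : |χ₂ ((p : ℕ) : ZMod N₂)| = 1 := by
      rcases hχ₂ p with h | h | h
      · exact absurd h hne2
      · rw [h]; norm_num
      · rw [h]; norm_num
    have hpe : (p ^ (n.factorization p) : ℕ) ≠ 0 := (pow_pos hpp.pos _).ne'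
    rw [hH1 hpe, ← hsigma hpe]
    exact key_pos χ₁ χ₂ k hk p _ hpp hcp1 hcp2 ha hb
  -- conclude
  have hu : IsUnit ((n : ℕ) : ZMod N₂) := (ZMod.isUnit_iff_coprime n N₂).mpr
    (Nat.Coprime.coprime_dvd_right ⟨N₁, Nat.mul_comm _ _⟩ hcop)
  have hne : χ₂ ((n : ℕ) : ZMod N₂) ≠ 0 := (hu.map χ₂).ne_zero
  rcases hχ₂ n with h | h | h
  · exact absurd h hne
  · rw [h] at hpos ⊢
    rw [one_mul] at hpos
    exact ⟨Real.sign_of_pos hpos, fun _ => hpos, fun h' => by norm_num at h'⟩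
  · rw [h] at hpos ⊢
    have hneg : sigmaR χ₁ χ₂ k n < 0 := by linarith
    exact ⟨Real.sign_of_neg hneg, fun h' => by norm_num at h', fun _ => hneg⟩
end

section
/- Let M be a positive integer, let χ₁, χ₂, ψ₁, ψ₂ be Dirichlet characters modulo M (with values in ℂ), let k ≥ 2 be an integer, and let c be a nonzero complex number. Then there exists a constant p₀ such that for every prime p > p₀, if χ₁(p) + χ₂(p)·p^{k-1} = c·(ψ₁(p) + ψ₂(p)·p^{k-1}), then χ₁(p) = c·ψ₁(p) and χ₂(p) = c·ψ₂(p). -/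
/-- Let `χ₁, χ₂, ψ₁, ψ₂` be Dirichlet characters modulo `M`, `k ≥ 2` and `c ≠ 0` a complex
number. Then there is a constant `p₀` such that for every prime `p > p₀`, the identity
`χ₁(p) + χ₂(p)p^{k-1} = c(ψ₁(p) + ψ₂(p)p^{k-1})` forces `χ₁(p) = cψ₁(p)` and
`χ₂(p) = cψ₂(p)`. -/
theorem stmt_6 (M : ℕ) (hM : 0 < M) (χ₁ χ₂ ψ₁ ψ₂ : DirichletCharacter ℂ M)
    (k : ℕ) (hk : 2 ≤ k) (c : ℂ) (hc : c ≠ 0) :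
    ∃ p₀ : ℕ, ∀ p : ℕ, p.Prime → p₀ < p →
      χ₁ (p : ZMod M) + χ₂ (p : ZMod M) * (p : ℂ) ^ (k - 1) =
        c * (ψ₁ (p : ZMod M) + ψ₂ (p : ZMod M) * (p : ℂ) ^ (k - 1)) →
      χ₁ (p : ZMod M) = c * ψ₁ (p : ZMod M) ∧ χ₂ (p : ZMod M) = c * ψ₂ (p : ZMod M) := by
  haveI : NeZero M := ⟨hM.ne'⟩
  classical
  set f : ZMod M → ℂ := fun a => χ₂ a - c * ψ₂ a with hf
  -- a uniform lower bound on nonzero values of f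
  obtain ⟨ε, hε, hεle⟩ : ∃ ε > 0, ∀ a : ZMod M, f a ≠ 0 → ε ≤ ‖f a‖ := by
    set S : Finset (ZMod M) := Finset.univ.filter (fun a => f a ≠ 0) with hS
    rcases S.eq_empty_or_nonempty with hSe | hSne
    · refine ⟨1, one_pos, fun a ha => ?_⟩
      have hmem : a ∈ S := Finset.mem_filter.mpr ⟨Finset.mem_univ a, ha⟩
      rw [hSe] at hmem
      exact absurd hmem (Finset.notMem_empty a)
    · obtain ⟨a₀, ha₀S, hmin⟩ := S.exists_min_image (fun a => ‖f a‖) hSne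
      have hne : f a₀ ≠ 0 := (Finset.mem_filter.mp ha₀S).2
      exact ⟨‖f a₀‖, norm_pos_iff.mpr hne,
        fun a ha => hmin a (Finset.mem_filter.mpr ⟨Finset.mem_univ a, ha⟩)⟩
  refine ⟨⌈(1 + ‖c‖) / ε⌉₊, fun p hp hgt heq => ?_⟩
  have hf0 : χ₂ (p : ZMod M) - c * ψ₂ (p : ZMod M) = 0 := by
    by_contra hne
    have hne' : f (p : ZMod M) ≠ 0 := hne
    have hεp : ε ≤ ‖f (p : ZMod M)‖ := hεle _ hne'
    have key : f (p : ZMod M) * (p : ℂ) ^ (k - 1)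
        = c * ψ₁ (p : ZMod M) - χ₁ (p : ZMod M) := by
      show (χ₂ (p : ZMod M) - c * ψ₂ (p : ZMod M)) * (p : ℂ) ^ (k - 1) = _
      linear_combination heq
    have hub : ‖f (p : ZMod M) * (p : ℂ) ^ (k - 1)‖ ≤ 1 + ‖c‖ := by
      rw [key]
      calc ‖c * ψ₁ (p : ZMod M) - χ₁ (p : ZMod M)‖
          ≤ ‖c * ψ₁ (p : ZMod M)‖ + ‖χ₁ (p : ZMod M)‖ := norm_sub_le _ _
        _ ≤ ‖c‖ * 1 + 1 := by
            rw [norm_mul]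
            exact add_le_add (mul_le_mul_of_nonneg_left (ψ₁.norm_le_one _)
              (norm_nonneg c)) (χ₁.norm_le_one _)
        _ = 1 + ‖c‖ := by ring
    have hple : (1 + ‖c‖) / ε < (p : ℝ) := lt_of_le_of_lt (Nat.le_ceil _)
      (by exact_mod_cast hgt)
    have hεp' : 1 + ‖c‖ < ε * p := by
      rw [div_lt_iff₀ hε] at hple; linarith
    have hlb : ε * p ≤ ‖f (p : ZMod M) * (p : ℂ) ^ (k - 1)‖ := by
      rw [norm_mul, norm_pow, Complex.norm_natCast]
      calc ε * (p : ℝ) ≤ ‖f (p : ZMod M)‖ * (p : ℝ) :=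
            mul_le_mul_of_nonneg_right hεp (by positivity)
        _ ≤ ‖f (p : ZMod M)‖ * (p : ℝ) ^ (k - 1) :=
            mul_le_mul_of_nonneg_left
              (by calc (p : ℝ) = (p : ℝ) ^ 1 := (pow_one _).symm
                    _ ≤ (p : ℝ) ^ (k - 1) := pow_le_pow_right₀
                        (by exact_mod_cast hp.one_lt.le) (by omega))
              (norm_nonneg _)
    linarith
  have h2 : χ₂ (p : ZMod M) = c * ψ₂ (p : ZMod M) := sub_eq_zero.mp hf0
  have h1 : χ₁ (p : ZMod M) + c * ψ₂ (p : ZMod M) * (p : ℂ) ^ (k - 1)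
      = c * ψ₁ (p : ZMod M) + c * ψ₂ (p : ZMod M) * (p : ℂ) ^ (k - 1) := by
    linear_combination heq - (p : ℂ) ^ (k - 1) * h2
  exact ⟨add_right_cancel h1, h2⟩
end

section
/- Let χ₁, χ₂ be Dirichlet characters modulo N₁, N₂ with values in ℂ, let k ≥ 2 be an integer, and let K be the subfield of ℂ generated over ℚ by the set of all Fourier coefficients {σ_{χ₁,χ₂}^{k-1}(n) : n ≥ 1}. Then K is a finite extension of ℚ, K is a Galois extension of ℚ, and the Galois group of K over ℚ (the group of ℚ-algebra automorphisms of K) is abelian. -/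
/-!
Every value of a Dirichlet character modulo `N` is `0` or a root of unity of order dividing the
exponent of `(ℤ/Nℤ)ˣ`, so all coefficients `σ_{χ₁,χ₂}^{k-1}(n)` lie in the cyclotomic field
`ℚ(ζ_M)`, `M` the product of the two exponents. Hence `K` is a subfield of a cyclotomic field,
and such a subfield is finite over `ℚ` and abelian Galois, being the fixed field of a (normal)
subgroup of the abelian group `(ℤ/Mℤ)ˣ`.
-/

/-- The signed divisor sum `σ_{χ₁,χ₂}^{k-1}(n) = ∑_{d ∣ n} χ₁(n/d) χ₂(d) d^{k-1}`. -/
noncomputable def sigmaC {N₁ N₂ : ℕ} (χ₁ : DirichletCharacter ℂ N₁)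
    (χ₂ : DirichletCharacter ℂ N₂) (k : ℕ) (n : ℕ) : ℂ :=
  ∑ d ∈ n.divisors, χ₁ ((n / d : ℕ) : ZMod N₁) * χ₂ ((d : ℕ) : ZMod N₂) * (d : ℂ) ^ (k - 1)

open IntermediateField

theorem IsPrimitiveRoot.isCyclotomicExtension_adjoin_simple {F L : Type*} [Field F] [Field L]
    [Algebra F L] {n : ℕ} [NeZero n] {ζ : L} (hζ : IsPrimitiveRoot ζ n) :
    IsCyclotomicExtension {n} F F⟮ζ⟯ :=
  (IntermediateField.isCyclotomicExtension_singleton_iff_eq_adjoin n F L F⟮ζ⟯ hζ).mpr rfl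

theorem IntermediateField.isAbelianGalois_of_le_adjoin_primitiveRoot {F L : Type*} [Field F]
    [Field L] [Algebra F L] {n : ℕ} [NeZero n] {ζ : L} (hζ : IsPrimitiveRoot ζ n)
    {K : IntermediateField F L} (hK : K ≤ F⟮ζ⟯) :
    FiniteDimensional F K ∧ IsAbelianGalois F K := by
  have := hζ.isCyclotomicExtension_adjoin_simple (F := F)
  have := IsCyclotomicExtension.finiteDimensional {n} F F⟮ζ⟯
  have := IsCyclotomicExtension.isAbelianGalois {n} F F⟮ζ⟯
  exact ⟨FiniteDimensional.of_injective (inclusion hK).toLinearMap (inclusion hK).injective,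
    .of_algHom (inclusion hK)⟩

theorem MulChar.apply_mem_adjoin_of_exponent_dvd {R F L : Type*} [CommMonoid R] [Field F]
    [Field L] [Algebra F L] (χ : MulChar R L) {n : ℕ} [NeZero n] {ζ : L}
    (hζ : IsPrimitiveRoot ζ n) (hn : Monoid.exponent Rˣ ∣ n) (a : R) :
    χ a ∈ F⟮ζ⟯ := by
  by_cases ha : IsUnit a
  · obtain ⟨u, rfl⟩ := ha
    have hu : χ u ^ n = 1 := by
      rw [← map_pow, ← Units.val_pow_eq_pow_val, Monoid.exponent_dvd_iff_forall_pow_eq_one.mp hn,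
        Units.val_one, map_one]
    obtain ⟨i, -, hi⟩ := hζ.eq_pow_of_pow_eq_one hu
    exact hi ▸ pow_mem (mem_adjoin_simple_self F ζ) i
  · exact χ.map_nonunit ha ▸ zero_mem _

theorem sigmaC_mem {S : Type*} [SetLike S ℂ] [SubsemiringClass S ℂ] {s : S} {N₁ N₂ : ℕ}
    {χ₁ : DirichletCharacter ℂ N₁} {χ₂ : DirichletCharacter ℂ N₂} (h₁ : ∀ a, χ₁ a ∈ s)
    (h₂ : ∀ a, χ₂ a ∈ s) (k n : ℕ) : sigmaC χ₁ χ₂ k n ∈ s :=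
  sum_mem fun d _ ↦ mul_mem (mul_mem (h₁ _) (h₂ _)) (pow_mem (natCast_mem s d) _)

theorem stmt_13_general (N₁ N₂ : ℕ) (χ₁ : DirichletCharacter ℂ N₁) (χ₂ : DirichletCharacter ℂ N₂)
    (k : ℕ)
    (K : IntermediateField ℚ ℂ)
    (hK : K = IntermediateField.adjoin ℚ
      {z : ℂ | ∃ n : ℕ, 0 < n ∧ z = sigmaC χ₁ χ₂ k n}) :
    FiniteDimensional ℚ K ∧ IsGalois ℚ K ∧
      ∀ σ τ : K ≃ₐ[ℚ] K, σ * τ = τ * σ := by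
  set M := Monoid.exponent (ZMod N₁)ˣ * Monoid.exponent (ZMod N₂)ˣ
  have : NeZero M := ⟨(Nat.mul_pos (Monoid.exponent_pos.mpr .of_finite)
    (Monoid.exponent_pos.mpr .of_finite)).ne'⟩
  have hζ := Complex.isPrimitiveRoot_exp M (NeZero.ne M)
  have hKζ : K ≤ ℚ⟮Complex.exp (2 * Real.pi * Complex.I / M)⟯ := by
    rw [hK, adjoin_le_iff]
    rintro _ ⟨n, -, rfl⟩
    exact sigmaC_mem (χ₁.apply_mem_adjoin_of_exponent_dvd hζ (dvd_mul_right _ _))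
      (χ₂.apply_mem_adjoin_of_exponent_dvd hζ (dvd_mul_left _ _)) k n
  obtain ⟨hfin, habel⟩ := isAbelianGalois_of_le_adjoin_primitiveRoot hζ hKζ
  exact ⟨hfin, habel.toIsGalois, habel.toIsMulCommutative.is_comm.comm⟩

/-- The field `K ⊆ ℂ` generated over `ℚ` by all Fourier coefficients
`σ_{χ₁,χ₂}^{k-1}(n)`, `n ≥ 1`, is a finite abelian Galois extension of `ℚ`. -/
theorem stmt_13 (N₁ N₂ : ℕ) (χ₁ : DirichletCharacter ℂ N₁) (χ₂ : DirichletCharacter ℂ N₂)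
    (k : ℕ) (hk : 2 ≤ k)
    (K : IntermediateField ℚ ℂ)
    (hK : K = IntermediateField.adjoin ℚ
      {z : ℂ | ∃ n : ℕ, 0 < n ∧ z = sigmaC χ₁ χ₂ k n}) :
    FiniteDimensional ℚ K ∧ IsGalois ℚ K ∧
      ∀ σ τ : K ≃ₐ[ℚ] K, σ * τ = τ * σ :=
  stmt_13_general N₁ N₂ χ₁ χ₂ k K hK
end

section
/- Let χ₁, χ₂ be Dirichlet characters modulo N₁, N₂ with values in ℂ, let k ≥ 2 be an integer, and let K be the subfield of ℂ generated over ℚ by the set {σ_{χ₁,χ₂}^{k-1}(n) : n ≥ 1}. Then for every positive integer n, the value χ₁(n)·χ₂(n) of the product character lies in K. -/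
theorem MonoidHom.apply_mem_of_forall_prime {M : Type*} [Monoid M] (f : ℕ →* M) {S : Submonoid M}
    (hS : ∀ p, p.Prime → f p ∈ S) {n : ℕ} (hn : n ≠ 0) : f n ∈ S := by
  rw [← Nat.prod_primeFactorsList hn, map_list_prod]
  exact list_prod_mem fun x hx => by
    obtain ⟨p, hp, rfl⟩ := List.mem_map.mp hx
    exact hS p (Nat.prime_of_mem_primeFactorsList hp)

section

variable {N₁ N₂ : ℕ} (χ₁ : DirichletCharacter ℂ N₁) (χ₂ : DirichletCharacter ℂ N₂)

noncomputable def DirichletCharacter.natProd : ℕ →* ℂ :=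
  χ₁.toMonoidHom.comp (Nat.castRingHom _).toMonoidHom *
    χ₂.toMonoidHom.comp (Nat.castRingHom _).toMonoidHom

@[simp]
theorem DirichletCharacter.natProd_apply (n : ℕ) : χ₁.natProd χ₂ n = χ₁ n * χ₂ n := rfl

theorem sigmaC_prime_sq_sub (k : ℕ) {p : ℕ} (hp : p.Prime) :
    sigmaC χ₁ χ₂ k p ^ 2 - sigmaC χ₁ χ₂ k (p ^ 2) = χ₁ p * χ₂ p * (p : ℂ) ^ (k - 1) := by
  have hp2 : p ^ 2 / p = p := by rw [pow_two, Nat.mul_div_cancel _ hp.pos]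
  have hp3 : p ^ 2 / p ^ 2 = 1 := Nat.div_self (pow_pos hp.pos 2)
  rw [sigmaC, sigmaC, hp.divisors, Finset.sum_pair hp.one_lt.ne, Nat.sum_divisors_prime_pow hp]
  simp only [Finset.sum_range_succ, Finset.sum_range_zero, pow_zero, pow_one, Nat.div_one,
    Nat.div_self hp.pos, hp2, hp3]
  push_cast
  simp only [map_one, map_pow]
  ring

end

theorem stmt_14_general (N₁ N₂ : ℕ) (χ₁ : DirichletCharacter ℂ N₁) (χ₂ : DirichletCharacter ℂ N₂)
    (k : ℕ) :
    ∀ n : ℕ, 0 < n →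
      χ₁ (n : ZMod N₁) * χ₂ (n : ZMod N₂) ∈
        IntermediateField.adjoin ℚ {z : ℂ | ∃ m : ℕ, 0 < m ∧ z = sigmaC χ₁ χ₂ k m} := by
  set K := IntermediateField.adjoin ℚ {z : ℂ | ∃ m : ℕ, 0 < m ∧ z = sigmaC χ₁ χ₂ k m}
  have hσ (m : ℕ) (hm : 0 < m) : sigmaC χ₁ χ₂ k m ∈ K :=
    IntermediateField.subset_adjoin _ _ ⟨m, hm, rfl⟩
  intro n hn
  rw [← DirichletCharacter.natProd_apply]
  refine (χ₁.natProd χ₂).apply_mem_of_forall_prime (S := K.toSubmonoid) (fun p hp => ?_) hn.ne'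
  have hp0 : (p : ℂ) ^ (k - 1) ≠ 0 := pow_ne_zero _ (Nat.cast_ne_zero.mpr hp.ne_zero)
  have hχ : χ₁.natProd χ₂ p =
      (sigmaC χ₁ χ₂ k p ^ 2 - sigmaC χ₁ χ₂ k (p ^ 2)) / (p : ℂ) ^ (k - 1) := by
    rw [sigmaC_prime_sq_sub χ₁ χ₂ k hp, mul_div_cancel_right₀ _ hp0,
      DirichletCharacter.natProd_apply]
  change _ ∈ K
  rw [hχ]
  exact div_mem (sub_mem (pow_mem (hσ p hp.pos) 2) (hσ _ (pow_pos hp.pos 2)))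
    (pow_mem (IntermediateField.natCast_mem K p) _)

/-- The field `K ⊆ ℂ` generated over `ℚ` by all Fourier coefficients
`σ_{χ₁,χ₂}^{k-1}(n)`, `n ≥ 1`, contains all values `χ₁(n)·χ₂(n)` of the product
character. -/
theorem stmt_14 (N₁ N₂ : ℕ) (χ₁ : DirichletCharacter ℂ N₁) (χ₂ : DirichletCharacter ℂ N₂)
    (k : ℕ) (hk : 2 ≤ k) :
    ∀ n : ℕ, 0 < n →
      χ₁ (n : ZMod N₁) * χ₂ (n : ZMod N₂) ∈
        IntermediateField.adjoin ℚ {z : ℂ | ∃ m : ℕ, 0 < m ∧ z = sigmaC χ₁ χ₂ k m} :=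
  stmt_14_general N₁ N₂ χ₁ χ₂ k
end

section
/- Let N ≥ 2 be an integer, let ψ₁, …, ψ_m (m ≥ 1) be pairwise distinct non-principal primitive Dirichlet characters whose conductors all divide N, and let c₁, …, c_m be nonzero complex numbers. Define f(n) := c₁ψ₁(n) + ⋯ + c_mψ_m(n) and suppose f(n) is a rational number for every positive integer n. Then there exist infinitely many primes p such that f(p) < 0. -/
/-!
Lift every `ψᵢ` to modulus `N`: by primitivity (the conductor is invariant under lifting) the
lifts `χᵢ` stay pairwise distinct, and they stay nontrivial. The function `g = ∑ cᵢ χᵢ` on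
`ZMod N` agrees with `f` on integers coprime to `N`, so it is rational-valued. By orthogonality
`∑ₐ g a = 0`, and by Dedekind's independence of characters `g ≠ 0`; hence `g a < 0` for some
`a`, necessarily a unit, and Dirichlet's theorem supplies infinitely many primes `p ≡ a mod N`.
-/

open DirichletCharacter

theorem MulChar.linearIndependent_coeFn (R R' : Type*) [CommMonoid R] [CommRing R']
    [IsDomain R'] :
    LinearIndependent R' (fun χ : MulChar R R' ↦ (χ : R → R')) := by
  have hinj : Function.Injective (MulChar.toMonoidHom : MulChar R R' → R →* R') :=
    fun _ _ h ↦ MulChar.ext' (MonoidHom.ext_iff.mp h)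
  exact (linearIndependent_monoidHom R R').comp _ hinj

namespace MulChar

variable {R R' ι : Type*} [Fintype ι]

lemma exists_sum_mul_apply_ne_zero [CommMonoid R] [CommRing R'] [IsDomain R']
    {χ : ι → MulChar R R'} (hχ : Function.Injective χ) {c : ι → R'} (hc : c ≠ 0) :
    ∃ a, ∑ i, c i * χ i a ≠ 0 := by
  by_contra! h
  refine hc (funext <| Fintype.linearIndependent_iff.mp
    ((linearIndependent_coeFn R R').comp χ hχ) c (funext fun a ↦ ?_))
  simpa using h a

variable [CommRing R] [Fintype R]

lemma sum_sum_mul_apply_eq_zero [CommRing R'] [IsDomain R'] {χ : ι → MulChar R R'}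
    (hχ : ∀ i, χ i ≠ 1) (c : ι → R') : ∑ a, ∑ i, c i * χ i a = 0 := by
  rw [Finset.sum_comm]
  exact Finset.sum_eq_zero fun i _ ↦ by
    rw [← Finset.mul_sum, sum_eq_zero_of_ne_one (hχ i), mul_zero]

theorem exists_isUnit_sum_mul_apply_eq_ratCast_neg {K : Type*} [Field K] [CharZero K]
    {χ : ι → MulChar R K} (hχ : Function.Injective χ) (hχ₁ : ∀ i, χ i ≠ 1) {c : ι → K}
    (hc : c ≠ 0) (hrat : ∀ a, IsUnit a → ∃ q : ℚ, ∑ i, c i * χ i a = q) :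
    ∃ a, IsUnit a ∧ ∃ q : ℚ, ∑ i, c i * χ i a = q ∧ q < 0 := by
  have hnonunit (a : R) (ha : ¬IsUnit a) : ∑ i, c i * χ i a = 0 := by
    simp [map_nonunit _ ha]
  have hrat' (a : R) : ∃ q : ℚ, ∑ i, c i * χ i a = q := by
    by_cases ha : IsUnit a
    · exact hrat a ha
    · exact ⟨0, by rw [hnonunit a ha, Rat.cast_zero]⟩
  choose q hq using hrat'
  have hsum : ∑ a, q a = 0 := by
    have hsumK := sum_sum_mul_apply_eq_zero hχ₁ c
    simp only [hq] at hsumK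
    exact_mod_cast hsumK
  obtain ⟨a₀, ha₀⟩ := exists_sum_mul_apply_ne_zero hχ hc
  obtain ⟨a, -, ha⟩ := Finset.exists_pos_of_sum_zero_of_exists_nonzero (-q)
    (by simp [hsum]) ⟨a₀, Finset.mem_univ _, by simpa [hq] using ha₀⟩
  refine ⟨a, by_contra fun hu ↦ ?_, q a, hq a, neg_pos.mp ha⟩
  have hqa : q a = 0 := by exact_mod_cast (hq a).symm.trans (hnonunit a hu)
  simp [hqa] at ha

end MulChar

namespace DirichletCharacter

variable {R : Type*} [CommMonoidWithZero R]

lemma changeLevel_apply_natCast {n m : ℕ} (hm : n ∣ m) (χ : DirichletCharacter R n) {a : ℕ}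
    (ha : a.Coprime m) : changeLevel hm χ a = χ a := by
  simpa using changeLevel_eq_cast_of_dvd' χ hm (Nat.isCoprime_iff_coprime.mpr ha)

lemma apply_natCast_eq_of_changeLevel_eq {n₁ n₂ m : ℕ} [NeZero m] {h₁ : n₁ ∣ m} {h₂ : n₂ ∣ m}
    {χ₁ : DirichletCharacter R n₁} {χ₂ : DirichletCharacter R n₂} (hχ₁ : χ₁.IsPrimitive)
    (hχ₂ : χ₂.IsPrimitive) (h : changeLevel h₁ χ₁ = changeLevel h₂ χ₂) (a : ℕ) :
    χ₁ a = χ₂ a := by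
  obtain rfl : n₁ = n₂ := calc
    n₁ = (changeLevel h₁ χ₁).conductor := hχ₁.symm.trans (conductor_changeLevel χ₁ h₁).symm
    _ = n₂ := by rw [h, conductor_changeLevel, hχ₂]
  rw [changeLevel_injective h₁ h]

end DirichletCharacter

/-- Let `N ≥ 2`, let `ψ₁, …, ψ_m` be pairwise distinct non-principal primitive Dirichlet
characters whose conductors (= moduli) divide `N`, and let `c₁, …, c_m` be nonzero complex
numbers. If `f(n) = c₁ψ₁(n) + ⋯ + c_mψ_m(n)` is rational for every `n ≥ 1`, then `f(p) < 0`
for infinitely many primes `p`. -/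
theorem stmt_17 (N : ℕ) (hN : 2 ≤ N) (m : ℕ) (hm : 1 ≤ m) (M : Fin m → ℕ)
    (ψ : (i : Fin m) → DirichletCharacter ℂ (M i))
    (hprim : ∀ i, DirichletCharacter.IsPrimitive (ψ i))
    (hnp : ∀ i, ψ i ≠ 1) (hdvd : ∀ i, M i ∣ N)
    (hdist : ∀ i j : Fin m, i ≠ j →
      ¬(∀ n : ℕ, ψ i ((n : ℕ) : ZMod (M i)) = ψ j ((n : ℕ) : ZMod (M j))))
    (c : Fin m → ℂ) (hc : ∀ i, c i ≠ 0)
    (hrat : ∀ n : ℕ, 0 < n → ∃ q : ℚ, ∑ i, c i * ψ i ((n : ℕ) : ZMod (M i)) = (q : ℂ)) :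
    {p : ℕ | p.Prime ∧ ∃ q : ℚ,
      (∑ i, c i * ψ i ((p : ℕ) : ZMod (M i))) = (q : ℂ) ∧ q < 0}.Infinite := by
  have : NeZero N := ⟨by omega⟩
  let χ i := changeLevel (hdvd i) (ψ i)
  have hχ (n : ℕ) (hn : n.Coprime N) : ∑ i, c i * χ i n = ∑ i, c i * ψ i n := by
    simp only [χ, changeLevel_apply_natCast _ _ hn]
  have hχinj : Function.Injective χ := fun i j h ↦ by
    by_contra hij
    exact hdist i j hij (apply_natCast_eq_of_changeLevel_eq (hprim i) (hprim j) h)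
  have hχ₁ (i : Fin m) : χ i ≠ 1 := (changeLevel_eq_one_iff _).not.mpr (hnp i)
  have hc₀ : c ≠ 0 := fun h ↦ hc ⟨0, hm⟩ (congrFun h _)
  have hχrat (a : ZMod N) (ha : IsUnit a) : ∃ q : ℚ, ∑ i, c i * χ i a = q := by
    have hcop : a.val.Coprime N := ZMod.val_coe_unit_coprime ha.unit
    have hpos : 0 < a.val := Nat.pos_of_ne_zero fun h ↦ by simp [h] at hcop; omega
    rw [← ZMod.natCast_zmod_val a, hχ _ hcop]
    exact hrat a.val hpos
  obtain ⟨a, ha, q, hq, hneg⟩ :=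
    MulChar.exists_isUnit_sum_mul_apply_eq_ratCast_neg hχinj hχ₁ hc₀ hχrat
  refine (Nat.infinite_setOfPred_prime_and_eq_mod ha).mono ?_
  rintro p ⟨hp, hpa⟩
  refine ⟨hp, q, ?_, hneg⟩
  rw [← hχ p ((ZMod.isUnit_iff_coprime p N).mp (hpa ▸ ha)), hpa, hq]
end
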